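/- arXiv:2008.04292 — 3 statements merged into one kernel-verified Lean document; each statement's English description precedes it below -/
import Mathlib

section
/- Let M(a,b,c,d) be the 6 × 6 block-diagonal skew-symmetric matrix consisting of two identical 3 × 3 skew-symmetric blocks each with upper entries (a−d, b, c). Then M has rank 4 at every point [a:b:c:d] ∈ ℙ³ except at P = [1:0:0:1], where M is the zero matrix. In particular M has constant rank 4 on the quadric surface {ad − bc = 0} ⊂ ℙ³. -/
open Matrix

/-- The 6×6 block-diagonal skew-symmetric matrix with two identical 3×3 blocks with
upper entries `(a-d, b, c)` (matrix (O(1)² bis) of the paper). -/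
def M7 (a b c d : ℂ) : Matrix (Fin 6) (Fin 6) ℂ :=
  !![0, a - d, b, 0, 0, 0;
     -(a - d), 0, c, 0, 0, 0;
     -b, -c, 0, 0, 0, 0;
     0, 0, 0, 0, a - d, b;
     0, 0, 0, -(a - d), 0, c;
     0, 0, 0, -b, -c, 0]

section VecSimp

variable {α : Type*} (a₀ a₁ a₂ a₃ a₄ a₅ : α)

@[simp] lemma vec6_0 : ![a₀,a₁,a₂,a₃,a₄,a₅] ⟨0, by omega⟩ = a₀ := rfl
@[simp] lemma vec6_1 : ![a₀,a₁,a₂,a₃,a₄,a₅] ⟨1, by omega⟩ = a₁ := rfl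
@[simp] lemma vec6_2 : ![a₀,a₁,a₂,a₃,a₄,a₅] ⟨2, by omega⟩ = a₂ := rfl
@[simp] lemma vec6_3 : ![a₀,a₁,a₂,a₃,a₄,a₅] ⟨3, by omega⟩ = a₃ := rfl
@[simp] lemma vec6_4 : ![a₀,a₁,a₂,a₃,a₄,a₅] ⟨4, by omega⟩ = a₄ := rfl
@[simp] lemma vec6_5 : ![a₀,a₁,a₂,a₃,a₄,a₅] ⟨5, by omega⟩ = a₅ := rfl
@[simp] lemma vec6_0n : ![a₀,a₁,a₂,a₃,a₄,a₅] (0 : Fin 6) = a₀ := rfl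
@[simp] lemma vec6_1n : ![a₀,a₁,a₂,a₃,a₄,a₅] (1 : Fin 6) = a₁ := rfl
@[simp] lemma vec6_2n : ![a₀,a₁,a₂,a₃,a₄,a₅] (2 : Fin 6) = a₂ := rfl
@[simp] lemma vec6_3n : ![a₀,a₁,a₂,a₃,a₄,a₅] (3 : Fin 6) = a₃ := rfl
@[simp] lemma vec6_4n : ![a₀,a₁,a₂,a₃,a₄,a₅] (4 : Fin 6) = a₄ := rfl
@[simp] lemma vec6_5n : ![a₀,a₁,a₂,a₃,a₄,a₅] (5 : Fin 6) = a₅ := rfl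

@[simp] lemma sa1 : (1 : Fin 4).succAbove 2 = 3 := rfl
@[simp] lemma sa2 : (2 : Fin 4).succAbove 2 = 3 := rfl

end VecSimp

/-- Submatrices have smaller rank (general index maps). -/
lemma rank_submatrix_le' (A : Matrix (Fin 6) (Fin 6) ℂ) (f g : Fin 4 → Fin 6) :
    (A.submatrix f g).rank ≤ A.rank := by
  have hE : A.submatrix f g =
      (1 : Matrix (Fin 6) (Fin 6) ℂ).submatrix f _root_.id * A *
        (1 : Matrix (Fin 6) (Fin 6) ℂ).submatrix _root_.id g := by
    ext i j
    simp [Matrix.mul_apply, Matrix.one_apply, Finset.sum_ite_eq, Finset.sum_ite_eq']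
  rw [hE]
  exact (Matrix.rank_mul_le_left _ _).trans (Matrix.rank_mul_le_right _ _)

lemma four_le_rank_of_det_ne_zero (A : Matrix (Fin 6) (Fin 6) ℂ) (f g : Fin 4 → Fin 6)
    (h : (A.submatrix f g).det ≠ 0) : 4 ≤ A.rank := by
  have hu : IsUnit (A.submatrix f g) :=
    (Matrix.isUnit_iff_isUnit_det _).2 h.isUnit
  have h4 : (A.submatrix f g).rank = 4 := by
    rw [Matrix.rank_of_isUnit _ hu, Fintype.card_fin]
  exact h4 ▸ rank_submatrix_le' A f g

/-- key rank computation -/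
lemma rank_M7_eq_four {a b c d : ℂ} (h : ¬ (a = d ∧ b = 0 ∧ c = 0)) :
    (M7 a b c d).rank = 4 := by
  have hne : a - d ≠ 0 ∨ b ≠ 0 ∨ c ≠ 0 := by
    by_contra hcon
    push_neg at hcon
    exact h ⟨by linear_combination hcon.1, hcon.2.1, hcon.2.2⟩
  -- lower bound: a 4×4 submatrix with nonzero determinant
  have hlow : 4 ≤ (M7 a b c d).rank := by
    obtain hx0 | hb0 | hc0 := hne
    · refine four_le_rank_of_det_ne_zero _ ![0,1,3,4] ![0,1,3,4] ?_
      have hsub : (M7 a b c d).submatrix ![0,1,3,4] ![0,1,3,4] =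
          !![0,a-d,0,0; -(a-d),0,0,0; 0,0,0,a-d; 0,0,-(a-d),0] := by
        ext i j; fin_cases i <;> fin_cases j <;> rfl
      have : ((M7 a b c d).submatrix ![0,1,3,4] ![0,1,3,4]).det = (a-d)^4 := by
        rw [hsub]
        simp [Matrix.det_succ_row_zero, Fin.sum_univ_succ]
        ring
      rw [this]
      exact pow_ne_zero 4 hx0
    · refine four_le_rank_of_det_ne_zero _ ![0,2,3,5] ![0,2,3,5] ?_
      have hsub : (M7 a b c d).submatrix ![0,2,3,5] ![0,2,3,5] =
          !![0,b,0,0; -b,0,0,0; 0,0,0,b; 0,0,-b,0] := by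
        ext i j; fin_cases i <;> fin_cases j <;> rfl
      have : ((M7 a b c d).submatrix ![0,2,3,5] ![0,2,3,5]).det = b^4 := by
        rw [hsub]
        simp [Matrix.det_succ_row_zero, Fin.sum_univ_succ]
        ring
      rw [this]
      exact pow_ne_zero 4 hb0
    · refine four_le_rank_of_det_ne_zero _ ![1,2,4,5] ![1,2,4,5] ?_
      have hsub : (M7 a b c d).submatrix ![1,2,4,5] ![1,2,4,5] =
          !![0,c,0,0; -c,0,0,0; 0,0,0,c; 0,0,-c,0] := by
        ext i j; fin_cases i <;> fin_cases j <;> rfl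
      have : ((M7 a b c d).submatrix ![1,2,4,5] ![1,2,4,5]).det = c^4 := by
        rw [hsub]
        simp [Matrix.det_succ_row_zero, Fin.sum_univ_succ]
        ring
      rw [this]
      exact pow_ne_zero 4 hc0
  -- upper bound via two independent kernel vectors
  set v1 : Fin 6 → ℂ := ![c, -b, a - d, 0, 0, 0] with hv1
  set v2 : Fin 6 → ℂ := ![0, 0, 0, c, -b, a - d] with hv2
  have hker1 : (M7 a b c d).mulVecLin v1 = 0 := by
    funext i
    fin_cases i <;>
      (simp only [M7, hv1, mulVecLin_apply, mulVec, dotProduct, Fin.sum_univ_six, of_apply,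
        vec6_0, vec6_1, vec6_2, vec6_3, vec6_4, vec6_5,
        vec6_0n, vec6_1n, vec6_2n, vec6_3n, vec6_4n, vec6_5n, Pi.zero_apply]; ring)
  have hker2 : (M7 a b c d).mulVecLin v2 = 0 := by
    funext i
    fin_cases i <;>
      (simp only [M7, hv2, mulVecLin_apply, mulVec, dotProduct, Fin.sum_univ_six, of_apply,
        vec6_0, vec6_1, vec6_2, vec6_3, vec6_4, vec6_5,
        vec6_0n, vec6_1n, vec6_2n, vec6_3n, vec6_4n, vec6_5n, Pi.zero_apply]; ring)
  have hli : LinearIndependent ℂ ![v1, v2] := by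
    rw [LinearIndependent.pair_iff]
    intro s t hst
    have e0 : s * c = 0 := by
      simpa only [hv1, hv2, Pi.add_apply, Pi.smul_apply, smul_eq_mul, vec6_0n,
        mul_zero, add_zero, Pi.zero_apply] using congrFun hst 0
    have e1 : s * (-b) = 0 := by
      simpa only [hv1, hv2, Pi.add_apply, Pi.smul_apply, smul_eq_mul, vec6_1n,
        mul_zero, add_zero, Pi.zero_apply] using congrFun hst 1
    have e2 : s * (a - d) = 0 := by
      simpa only [hv1, hv2, Pi.add_apply, Pi.smul_apply, smul_eq_mul, vec6_2n,
        mul_zero, add_zero, Pi.zero_apply] using congrFun hst 2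
    have e3 : t * c = 0 := by
      simpa only [hv1, hv2, Pi.add_apply, Pi.smul_apply, smul_eq_mul, vec6_3n,
        mul_zero, zero_add, Pi.zero_apply] using congrFun hst 3
    have e4 : t * (-b) = 0 := by
      simpa only [hv1, hv2, Pi.add_apply, Pi.smul_apply, smul_eq_mul, vec6_4n,
        mul_zero, zero_add, Pi.zero_apply] using congrFun hst 4
    have e5 : t * (a - d) = 0 := by
      simpa only [hv1, hv2, Pi.add_apply, Pi.smul_apply, smul_eq_mul, vec6_5n,
        mul_zero, zero_add, Pi.zero_apply] using congrFun hst 5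
    obtain hx0 | hb0 | hc0 := hne
    · exact ⟨(mul_eq_zero.mp e2).resolve_right hx0, (mul_eq_zero.mp e5).resolve_right hx0⟩
    · exact ⟨(mul_eq_zero.mp e1).resolve_right (neg_ne_zero.mpr hb0),
        (mul_eq_zero.mp e4).resolve_right (neg_ne_zero.mpr hb0)⟩
    · exact ⟨(mul_eq_zero.mp e0).resolve_right hc0, (mul_eq_zero.mp e3).resolve_right hc0⟩
  have hspan : Submodule.span ℂ (Set.range ![v1, v2]) ≤
      LinearMap.ker (M7 a b c d).mulVecLin := by
    rw [Submodule.span_le]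
    rintro w ⟨i, rfl⟩
    fin_cases i
    · exact hker1
    · exact hker2
  have hker : 2 ≤ Module.finrank ℂ (LinearMap.ker (M7 a b c d).mulVecLin) := by
    have h2 := finrank_span_eq_card hli
    rw [Fintype.card_fin] at h2
    calc (2 : ℕ) = Module.finrank ℂ (Submodule.span ℂ (Set.range ![v1, v2])) := h2.symm
      _ ≤ _ := Submodule.finrank_mono hspan
  have hrn : (M7 a b c d).rank +
      Module.finrank ℂ (LinearMap.ker (M7 a b c d).mulVecLin) = 6 := by
    have h6 := LinearMap.finrank_range_add_finrank_ker (M7 a b c d).mulVecLin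
    simpa [Matrix.rank] using h6
  omega

/-- `M7` has rank 4 at every point `[a:b:c:d] ∈ ℙ³` except at `P = [1:0:0:1]`, where it
is the zero matrix; in particular it has constant rank 4 on the quadric `{ad - bc = 0}`. -/
theorem rank_M7 (a b c d : ℂ) (h : (a, b, c, d) ≠ (0, 0, 0, 0)) :
    (¬ (a = d ∧ b = 0 ∧ c = 0) → (M7 a b c d).rank = 4) ∧
    ((a = d ∧ b = 0 ∧ c = 0) → M7 a b c d = 0) ∧
    (a * d - b * c = 0 → (M7 a b c d).rank = 4) := by
  refine ⟨fun h' => rank_M7_eq_four h', fun ⟨h1, h2, h3⟩ => ?_, fun hq => ?_⟩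
  · subst h1 h2 h3
    ext i j
    fin_cases i <;> fin_cases j <;>
      simp only [M7, of_apply, vec6_0, vec6_1, vec6_2, vec6_3, vec6_4, vec6_5,
        vec6_0n, vec6_1n, vec6_2n, vec6_3n, vec6_4n, vec6_5n, Matrix.zero_apply,
        sub_self, neg_zero]
  · apply rank_M7_eq_four
    rintro ⟨h1, h2, h3⟩
    subst h1 h2 h3
    have ha : a = 0 := by
      have : a * a = 0 := by linear_combination hq
      exact mul_self_eq_zero.mp this
    exact h (by simp [ha])
end

section
/- Let A be an n × n skew-symmetric complex matrix of rank 2r, let o ∈ ℂⁿ be nonzero, and let P : ℂⁿ → ℂⁿ⁻¹ be a surjective linear map with kernel spanned by o. Then the skew-symmetric matrix P A Pᵀ has rank 2r if o does not belong to the column space of A, and rank 2r − 2 if o belongs to the column space of A. -/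
/-!
Write `⊥` for orthogonality under the dot product. For every matrix `M`,
`range M = (ker Mᵀ)^⊥`; hence `range Pᵀ = o^⊥ =: H`, the column space of `P A Pᵀ` is `P (A H)`,
and, `A` being skew, `range A = (ker A)^⊥`, so that `o ∈ range A` iff `ker A ≤ H`.

If `o ∉ range A`, then `H ⊓ ker A` is a hyperplane in `ker A` and `P` is injective on `A H`, so
the rank is `(n - 1) - (dim ker A - 1) = 2r`. If `o ∈ range A`, then `dim A H = (n - 1) - dim ker A
= 2r - 1`, and `o ∈ A H` because `o = A w` forces `o ⬝ w = w ⬝ A w = 0`; so `P` loses one more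
dimension on `A H`.
-/

open Matrix Module LinearMap
open LinearMap (BilinForm)

section FiniteDimensional

variable {K V W : Type*} [Field K] [AddCommGroup V] [Module K V] [AddCommGroup W] [Module K W]
  [FiniteDimensional K V]

theorem Submodule.finrank_map_add_finrank_inf_ker (f : V →ₗ[K] W) (S : Submodule K V) :
    finrank K (S.map f) + finrank K ↥(S ⊓ ker f) = finrank K S := by
  have h := finrank_range_add_finrank_ker (f.domRestrict S)
  rwa [range_domRestrict, ker_domRestrict, ← Submodule.finrank_map_subtype_eq S,
    Submodule.map_comap_subtype] at h

theorem Submodule.finrank_map_of_notMem_of_ker_eq_span_singleton {f : V →ₗ[K] W} {o : V}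
    (hker : ker f = K ∙ o) {S : Submodule K V} (hoS : o ∉ S) :
    finrank K (S.map f) = finrank K S := by
  have h := S.finrank_map_add_finrank_inf_ker f
  rwa [hker, (Submodule.disjoint_span_singleton.mpr fun h => absurd h hoS).eq_bot, finrank_bot,
    add_zero] at h

theorem Submodule.finrank_map_add_one_of_mem_of_ker_eq_span_singleton {f : V →ₗ[K] W} {o : V}
    (hker : ker f = K ∙ o) (ho : o ≠ 0) {S : Submodule K V} (hoS : o ∈ S) :
    finrank K (S.map f) + 1 = finrank K S := by
  have h := S.finrank_map_add_finrank_inf_ker f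
  rwa [hker, inf_eq_right.mpr ((Submodule.span_singleton_le_iff_mem o S).mpr hoS),
    finrank_span_singleton ho] at h

theorem Submodule.finrank_inf_add_one_of_not_le {H L : Submodule K V}
    (hH : finrank K H + 1 = finrank K V) (hLH : ¬L ≤ H) :
    finrank K ↥(H ⊓ L) + 1 = finrank K L := by
  have hlt : finrank K H < finrank K ↥(H ⊔ L) :=
    Submodule.finrank_lt_finrank_of_lt <|
      lt_of_le_of_ne le_sup_left fun h => hLH (h ▸ le_sup_right)
  have hle : finrank K ↥(H ⊔ L) ≤ finrank K V := Submodule.finrank_le _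
  have := Submodule.finrank_sup_add_finrank_inf_eq H L
  omega

end FiniteDimensional

theorem LinearMap.BilinForm.mem_orthogonal_iff_le_orthogonal_span_singleton {R M : Type*}
    [CommRing R] [AddCommGroup M] [Module R M] {B : BilinForm R M} (hB : B.IsRefl)
    {N : Submodule R M} {x : M} : x ∈ B.orthogonal N ↔ N ≤ B.orthogonal (R ∙ x) := by
  simp only [BilinForm.mem_orthogonal_iff, SetLike.le_def, Submodule.mem_span_singleton]
  constructor
  · rintro h n hn _ ⟨c, rfl⟩
    rw [map_smul, smul_apply, hB _ _ (h n hn), smul_zero]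
  · exact fun h n hn => hB _ _ (h hn x ⟨1, one_smul R x⟩)

section DotProduct

variable {K m n : Type*} [Field K] [Fintype m] [Fintype n]

theorem dotProductBilin_isRefl : BilinForm.IsRefl (dotProductBilin K K : BilinForm K (n → K)) :=
  fun x y h => by
    rw [dotProductBilin_apply_apply] at h ⊢
    rwa [dotProduct_comm]

theorem dotProductBilin_nondegenerate :
    (dotProductBilin K K : BilinForm K (n → K)).Nondegenerate :=
  (IsRefl.nondegenerate_iff_separatingLeft (dotProductBilin_isRefl (K := K) (n := n))).mpr
    fun x hx => dotProduct_eq_zero x hx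

theorem Matrix.range_mulVecLin_eq_orthogonal_ker_transpose (A : Matrix m n K) :
    range A.mulVecLin = BilinForm.orthogonal (dotProductBilin K K) (ker Aᵀ.mulVecLin) := by
  refine Submodule.eq_of_le_of_finrank_le ?_ ?_
  · rintro _ ⟨w, rfl⟩ u hu
    rw [mem_ker, mulVecLin_apply, mulVec_transpose] at hu
    rw [dotProductBilin_apply_apply, mulVecLin_apply, dotProduct_mulVec, hu, zero_dotProduct]
  · rw [BilinForm.finrank_orthogonal dotProductBilin_nondegenerate,
      ← finrank_range_add_finrank_ker Aᵀ.mulVecLin, Nat.add_sub_cancel]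
    exact (rank_transpose A).le

theorem Matrix.dotProduct_mulVec_self_eq_zero_of_transpose_eq_neg [NeZero (2 : K)]
    {A : Matrix n n K} (hA : Aᵀ = -A) (w : n → K) : w ⬝ᵥ A *ᵥ w = 0 := by
  have h : w ⬝ᵥ A *ᵥ w = -(w ⬝ᵥ A *ᵥ w) := by
    conv_lhs =>
      rw [dotProduct_mulVec, ← mulVec_transpose, hA, neg_mulVec, neg_dotProduct, dotProduct_comm]
  have h2 : (2 : K) * (w ⬝ᵥ A *ᵥ w) = 0 := by linear_combination h
  exact (mul_eq_zero.mp h2).resolve_left two_ne_zero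

theorem Matrix.mem_map_orthogonal_span_singleton_of_mem_range [NeZero (2 : K)]
    {A : Matrix n n K} (hA : Aᵀ = -A) {o : n → K} (ho : o ∈ range A.mulVecLin) :
    o ∈ (BilinForm.orthogonal (dotProductBilin K K) (K ∙ o)).map A.mulVecLin := by
  obtain ⟨w, rfl⟩ := ho
  refine ⟨w, fun v hv => ?_, rfl⟩
  obtain ⟨c, rfl⟩ := Submodule.mem_span_singleton.mp hv
  rw [map_smul, LinearMap.smul_apply, dotProductBilin_apply_apply, mulVecLin_apply, dotProduct_comm,
    dotProduct_mulVec_self_eq_zero_of_transpose_eq_neg hA, smul_zero]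

end DotProduct

theorem rank_projection_skew_general {n r : ℕ} (A : Matrix (Fin n) (Fin n) ℂ)
    (hA : Aᵀ = -A) (hrank : A.rank = 2 * r)
    (o : Fin n → ℂ) (ho : o ≠ 0)
    (P : Matrix (Fin (n - 1)) (Fin n) ℂ)
    (hker : LinearMap.ker P.mulVecLin = Submodule.span ℂ {o}) :
    (o ∉ LinearMap.range A.mulVecLin → (P * A * Pᵀ).rank = 2 * r) ∧
    (o ∈ LinearMap.range A.mulVecLin → (P * A * Pᵀ).rank = 2 * r - 2) := by
  set H := BilinForm.orthogonal (dotProductBilin ℂ ℂ) (ℂ ∙ o)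
  have hrankPAPt : (P * A * Pᵀ).rank = finrank ℂ ((H.map A.mulVecLin).map P.mulVecLin) := by
    rw [Matrix.rank, mulVecLin_mul, mulVecLin_mul, range_comp, Submodule.map_comp,
      range_mulVecLin_eq_orthogonal_ker_transpose, transpose_transpose, hker]
  have hmem_range_iff : o ∈ range A.mulVecLin ↔ ker A.mulVecLin ≤ H := by
    have hkerT : ker Aᵀ.mulVecLin = ker A.mulVecLin := by ext; simp [hA]
    rw [range_mulVecLin_eq_orthogonal_ker_transpose, hkerT,
      BilinForm.mem_orthogonal_iff_le_orthogonal_span_singleton dotProductBilin_isRefl]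
  have hH : finrank ℂ H + 1 = n := by
    have h1 : finrank ℂ (ℂ ∙ o) = 1 := finrank_span_singleton ho
    have h2 := (ℂ ∙ o).finrank_le
    rw [BilinForm.finrank_orthogonal dotProductBilin_nondegenerate, h1, finrank_fin_fun]
    rw [h1, finrank_fin_fun] at h2
    omega
  have hnull : A.rank + finrank ℂ (ker A.mulVecLin) = n :=
    (finrank_range_add_finrank_ker A.mulVecLin).trans (finrank_fin_fun ℂ)
  have hAH := H.finrank_map_add_finrank_inf_ker A.mulVecLin
  constructor
  · intro hoA
    have hinf := Submodule.finrank_inf_add_one_of_not_le (by rwa [finrank_fin_fun])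
      (mt hmem_range_iff.mpr hoA)
    rw [hrankPAPt, Submodule.finrank_map_of_notMem_of_ker_eq_span_singleton hker
      fun h => hoA (LinearMap.map_le_range h)]
    omega
  · intro hoA
    rw [inf_eq_right.mpr (hmem_range_iff.mp hoA)] at hAH
    have hP : finrank ℂ ((H.map A.mulVecLin).map P.mulVecLin) + 1
        = finrank ℂ (H.map A.mulVecLin) :=
      Submodule.finrank_map_add_one_of_mem_of_ker_eq_span_singleton hker ho
        (mem_map_orthogonal_span_singleton_of_mem_range hA hoA)
    rw [hrankPAPt]
    omega

/-- Projection of a skew-symmetric matrix: if `A` is `n × n` skew-symmetric of rank `2r`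
and `P : ℂⁿ → ℂⁿ⁻¹` is surjective with kernel spanned by `o ≠ 0`, then `P A Pᵀ` has
rank `2r` if `o` is not in the column space of `A`, and rank `2r - 2` otherwise. -/
theorem rank_projection_skew {n r : ℕ} (A : Matrix (Fin n) (Fin n) ℂ)
    (hA : Aᵀ = -A) (hrank : A.rank = 2 * r)
    (o : Fin n → ℂ) (ho : o ≠ 0)
    (P : Matrix (Fin (n - 1)) (Fin n) ℂ)
    (hPsurj : Function.Surjective P.mulVecLin)
    (hker : LinearMap.ker P.mulVecLin = Submodule.span ℂ {o}) :
    (o ∉ LinearMap.range A.mulVecLin → (P * A * Pᵀ).rank = 2 * r) ∧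
    (o ∈ LinearMap.range A.mulVecLin → (P * A * Pᵀ).rank = 2 * r - 2) :=
  rank_projection_skew_general A hA hrank o ho P hker
end

section
/- Let A(a,b,c,d) be the 6 × 6 skew-symmetric matrix denoted (O(2,1)+O(0,1)) in the paper, with upper-triangular entries A₁₂ = 0, A₁₃ = b, A₁₄ = c, A₁₅ = d, A₁₆ = a, A₂₃ = a, A₂₄ = b, A₂₅ = c, A₂₆ = d, A₃₄ = 0, A₃₅ = a, A₃₆ = −a, A₄₅ = 0, A₄₆ = 0, A₅₆ = 0. Then the Pfaffian of A equals, up to a nonzero constant factor, a · (ab − c² + bd − cd), and A has constant rank 4 at every point [a:b:c:d] of the smooth quadric surface {ab − c² + bd − cd = 0} ⊂ ℙ³. -/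
open Matrix

/-- The Pfaffian of a `2m × 2m` skew-symmetric matrix over a commutative ring,
defined by the standard sum over perfect matchings (encoded by permutations in
normal form). -/
def Pf {R : Type*} [CommRing R] (m : ℕ) (A : Matrix (Fin (2 * m)) (Fin (2 * m)) R) : R :=
  ∑ σ ∈ Finset.univ.filter (fun σ : Equiv.Perm (Fin (2 * m)) =>
      (∀ i : Fin m, σ ⟨2 * i.val, by have := i.isLt; omega⟩
          < σ ⟨2 * i.val + 1, by have := i.isLt; omega⟩) ∧
      (∀ i j : Fin m, i < j → σ ⟨2 * i.val, by have := i.isLt; omega⟩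
          < σ ⟨2 * j.val, by have := j.isLt; omega⟩)),
    (Equiv.Perm.sign σ : ℤ) •
      ∏ i : Fin m, A (σ ⟨2 * i.val, by have := i.isLt; omega⟩)
        (σ ⟨2 * i.val + 1, by have := i.isLt; omega⟩)

/-- The 6×6 skew-symmetric matrix (O(2,1)+O(0,1)) of the paper. -/
def A17 (a b c d : ℂ) : Matrix (Fin (2 * 3)) (Fin (2 * 3)) ℂ :=
  !![0, 0, b, c, d, a;
     0, 0, a, b, c, d;
     -b, -a, 0, 0, a, -a;
     -c, -b, 0, 0, 0, 0;
     -d, -c, -a, 0, 0, 0;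
     -a, -d, a, 0, 0, 0]


def pp0 : Equiv.Perm (Fin (2*3)) := ⟨![0,1,2,3,4,5], ![0,1,2,3,4,5], by decide, by decide⟩
def pp1 : Equiv.Perm (Fin (2*3)) := ⟨![0,1,2,4,3,5], ![0,1,2,4,3,5], by decide, by decide⟩
def pp2 : Equiv.Perm (Fin (2*3)) := ⟨![0,1,2,5,3,4], ![0,1,2,4,5,3], by decide, by decide⟩
def pp3 : Equiv.Perm (Fin (2*3)) := ⟨![0,2,1,3,4,5], ![0,2,1,3,4,5], by decide, by decide⟩
def pp4 : Equiv.Perm (Fin (2*3)) := ⟨![0,2,1,4,3,5], ![0,2,1,4,3,5], by decide, by decide⟩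
def pp5 : Equiv.Perm (Fin (2*3)) := ⟨![0,2,1,5,3,4], ![0,2,1,4,5,3], by decide, by decide⟩
def pp6 : Equiv.Perm (Fin (2*3)) := ⟨![0,3,1,2,4,5], ![0,2,3,1,4,5], by decide, by decide⟩
def pp7 : Equiv.Perm (Fin (2*3)) := ⟨![0,3,1,4,2,5], ![0,2,4,1,3,5], by decide, by decide⟩
def pp8 : Equiv.Perm (Fin (2*3)) := ⟨![0,3,1,5,2,4], ![0,2,4,1,5,3], by decide, by decide⟩
def pp9 : Equiv.Perm (Fin (2*3)) := ⟨![0,4,1,2,3,5], ![0,2,3,4,1,5], by decide, by decide⟩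
def pp10 : Equiv.Perm (Fin (2*3)) := ⟨![0,4,1,3,2,5], ![0,2,4,3,1,5], by decide, by decide⟩
def pp11 : Equiv.Perm (Fin (2*3)) := ⟨![0,4,1,5,2,3], ![0,2,4,5,1,3], by decide, by decide⟩
def pp12 : Equiv.Perm (Fin (2*3)) := ⟨![0,5,1,2,3,4], ![0,2,3,4,5,1], by decide, by decide⟩
def pp13 : Equiv.Perm (Fin (2*3)) := ⟨![0,5,1,3,2,4], ![0,2,4,3,5,1], by decide, by decide⟩
def pp14 : Equiv.Perm (Fin (2*3)) := ⟨![0,5,1,4,2,3], ![0,2,4,5,3,1], by decide, by decide⟩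

set_option maxRecDepth 40000 in
theorem pf_eval (a b c d : ℂ) :
    Pf 3 (A17 a b c d) = -(a * (a * b - c ^ 2 + b * d - c * d)) := by
  have hset : (Finset.univ.filter (fun σ : Equiv.Perm (Fin (2 * 3)) =>
      (∀ i : Fin 3, σ ⟨2 * i.val, by have := i.isLt; omega⟩
          < σ ⟨2 * i.val + 1, by have := i.isLt; omega⟩) ∧
      (∀ i j : Fin 3, i < j → σ ⟨2 * i.val, by have := i.isLt; omega⟩
          < σ ⟨2 * j.val, by have := j.isLt; omega⟩)))
      = {pp0, pp1, pp2, pp3, pp4, pp5, pp6, pp7, pp8, pp9, pp10, pp11, pp12, pp13, pp14} := by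
    decide
  rw [Pf, hset]
  rw [Finset.sum_insert (by decide), Finset.sum_insert (by decide), Finset.sum_insert (by decide),
    Finset.sum_insert (by decide), Finset.sum_insert (by decide), Finset.sum_insert (by decide),
    Finset.sum_insert (by decide), Finset.sum_insert (by decide), Finset.sum_insert (by decide),
    Finset.sum_insert (by decide), Finset.sum_insert (by decide), Finset.sum_insert (by decide),
    Finset.sum_insert (by decide), Finset.sum_insert (by decide), Finset.sum_singleton]
  have h0 : (Equiv.Perm.sign pp0 : ℤ) •
      (∏ i : Fin 3, A17 a b c d (pp0 ⟨2 * i.val, by have := i.isLt; omega⟩)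
        (pp0 ⟨2 * i.val + 1, by have := i.isLt; omega⟩)) =
      (1 : ℤ) • ((0 : ℂ) * (0 : ℂ) * (0 : ℂ)) := by
    rw [show (Equiv.Perm.sign pp0 : ℤ) = (1 : ℤ) from by decide, Fin.prod_univ_three]
    rfl
  have h1 : (Equiv.Perm.sign pp1 : ℤ) •
      (∏ i : Fin 3, A17 a b c d (pp1 ⟨2 * i.val, by have := i.isLt; omega⟩)
        (pp1 ⟨2 * i.val + 1, by have := i.isLt; omega⟩)) =
      ((-1) : ℤ) • ((0 : ℂ) * (a : ℂ) * (0 : ℂ)) := by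
    rw [show (Equiv.Perm.sign pp1 : ℤ) = ((-1) : ℤ) from by decide, Fin.prod_univ_three]
    rfl
  have h2 : (Equiv.Perm.sign pp2 : ℤ) •
      (∏ i : Fin 3, A17 a b c d (pp2 ⟨2 * i.val, by have := i.isLt; omega⟩)
        (pp2 ⟨2 * i.val + 1, by have := i.isLt; omega⟩)) =
      (1 : ℤ) • ((0 : ℂ) * (-a : ℂ) * (0 : ℂ)) := by
    rw [show (Equiv.Perm.sign pp2 : ℤ) = (1 : ℤ) from by decide, Fin.prod_univ_three]
    rfl
  have h3 : (Equiv.Perm.sign pp3 : ℤ) •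
      (∏ i : Fin 3, A17 a b c d (pp3 ⟨2 * i.val, by have := i.isLt; omega⟩)
        (pp3 ⟨2 * i.val + 1, by have := i.isLt; omega⟩)) =
      ((-1) : ℤ) • ((b : ℂ) * (b : ℂ) * (0 : ℂ)) := by
    rw [show (Equiv.Perm.sign pp3 : ℤ) = ((-1) : ℤ) from by decide, Fin.prod_univ_three]
    rfl
  have h4 : (Equiv.Perm.sign pp4 : ℤ) •
      (∏ i : Fin 3, A17 a b c d (pp4 ⟨2 * i.val, by have := i.isLt; omega⟩)
        (pp4 ⟨2 * i.val + 1, by have := i.isLt; omega⟩)) =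
      (1 : ℤ) • ((b : ℂ) * (c : ℂ) * (0 : ℂ)) := by
    rw [show (Equiv.Perm.sign pp4 : ℤ) = (1 : ℤ) from by decide, Fin.prod_univ_three]
    rfl
  have h5 : (Equiv.Perm.sign pp5 : ℤ) •
      (∏ i : Fin 3, A17 a b c d (pp5 ⟨2 * i.val, by have := i.isLt; omega⟩)
        (pp5 ⟨2 * i.val + 1, by have := i.isLt; omega⟩)) =
      ((-1) : ℤ) • ((b : ℂ) * (d : ℂ) * (0 : ℂ)) := by
    rw [show (Equiv.Perm.sign pp5 : ℤ) = ((-1) : ℤ) from by decide, Fin.prod_univ_three]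
    rfl
  have h6 : (Equiv.Perm.sign pp6 : ℤ) •
      (∏ i : Fin 3, A17 a b c d (pp6 ⟨2 * i.val, by have := i.isLt; omega⟩)
        (pp6 ⟨2 * i.val + 1, by have := i.isLt; omega⟩)) =
      (1 : ℤ) • ((c : ℂ) * (a : ℂ) * (0 : ℂ)) := by
    rw [show (Equiv.Perm.sign pp6 : ℤ) = (1 : ℤ) from by decide, Fin.prod_univ_three]
    rfl
  have h7 : (Equiv.Perm.sign pp7 : ℤ) •
      (∏ i : Fin 3, A17 a b c d (pp7 ⟨2 * i.val, by have := i.isLt; omega⟩)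
        (pp7 ⟨2 * i.val + 1, by have := i.isLt; omega⟩)) =
      ((-1) : ℤ) • ((c : ℂ) * (c : ℂ) * (-a : ℂ)) := by
    rw [show (Equiv.Perm.sign pp7 : ℤ) = ((-1) : ℤ) from by decide, Fin.prod_univ_three]
    rfl
  have h8 : (Equiv.Perm.sign pp8 : ℤ) •
      (∏ i : Fin 3, A17 a b c d (pp8 ⟨2 * i.val, by have := i.isLt; omega⟩)
        (pp8 ⟨2 * i.val + 1, by have := i.isLt; omega⟩)) =
      (1 : ℤ) • ((c : ℂ) * (d : ℂ) * (a : ℂ)) := by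
    rw [show (Equiv.Perm.sign pp8 : ℤ) = (1 : ℤ) from by decide, Fin.prod_univ_three]
    rfl
  have h9 : (Equiv.Perm.sign pp9 : ℤ) •
      (∏ i : Fin 3, A17 a b c d (pp9 ⟨2 * i.val, by have := i.isLt; omega⟩)
        (pp9 ⟨2 * i.val + 1, by have := i.isLt; omega⟩)) =
      ((-1) : ℤ) • ((d : ℂ) * (a : ℂ) * (0 : ℂ)) := by
    rw [show (Equiv.Perm.sign pp9 : ℤ) = ((-1) : ℤ) from by decide, Fin.prod_univ_three]
    rfl
  have h10 : (Equiv.Perm.sign pp10 : ℤ) •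
      (∏ i : Fin 3, A17 a b c d (pp10 ⟨2 * i.val, by have := i.isLt; omega⟩)
        (pp10 ⟨2 * i.val + 1, by have := i.isLt; omega⟩)) =
      (1 : ℤ) • ((d : ℂ) * (b : ℂ) * (-a : ℂ)) := by
    rw [show (Equiv.Perm.sign pp10 : ℤ) = (1 : ℤ) from by decide, Fin.prod_univ_three]
    rfl
  have h11 : (Equiv.Perm.sign pp11 : ℤ) •
      (∏ i : Fin 3, A17 a b c d (pp11 ⟨2 * i.val, by have := i.isLt; omega⟩)
        (pp11 ⟨2 * i.val + 1, by have := i.isLt; omega⟩)) =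
      ((-1) : ℤ) • ((d : ℂ) * (d : ℂ) * (0 : ℂ)) := by
    rw [show (Equiv.Perm.sign pp11 : ℤ) = ((-1) : ℤ) from by decide, Fin.prod_univ_three]
    rfl
  have h12 : (Equiv.Perm.sign pp12 : ℤ) •
      (∏ i : Fin 3, A17 a b c d (pp12 ⟨2 * i.val, by have := i.isLt; omega⟩)
        (pp12 ⟨2 * i.val + 1, by have := i.isLt; omega⟩)) =
      (1 : ℤ) • ((a : ℂ) * (a : ℂ) * (0 : ℂ)) := by
    rw [show (Equiv.Perm.sign pp12 : ℤ) = (1 : ℤ) from by decide, Fin.prod_univ_three]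
    rfl
  have h13 : (Equiv.Perm.sign pp13 : ℤ) •
      (∏ i : Fin 3, A17 a b c d (pp13 ⟨2 * i.val, by have := i.isLt; omega⟩)
        (pp13 ⟨2 * i.val + 1, by have := i.isLt; omega⟩)) =
      ((-1) : ℤ) • ((a : ℂ) * (b : ℂ) * (a : ℂ)) := by
    rw [show (Equiv.Perm.sign pp13 : ℤ) = ((-1) : ℤ) from by decide, Fin.prod_univ_three]
    rfl
  have h14 : (Equiv.Perm.sign pp14 : ℤ) •
      (∏ i : Fin 3, A17 a b c d (pp14 ⟨2 * i.val, by have := i.isLt; omega⟩)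
        (pp14 ⟨2 * i.val + 1, by have := i.isLt; omega⟩)) =
      (1 : ℤ) • ((a : ℂ) * (c : ℂ) * (0 : ℂ)) := by
    rw [show (Equiv.Perm.sign pp14 : ℤ) = (1 : ℤ) from by decide, Fin.prod_univ_three]
    rfl
  rw [h0, h1, h2, h3, h4, h5, h6, h7, h8, h9, h10, h11, h12, h13, h14]

  simp only [neg_smul, one_smul]
  ring

lemma mulVec6 (M : Matrix (Fin 6) (Fin 6) ℂ) (u : Fin 6 → ℂ) (i : Fin 6) :
    M.mulVec u i = M i 0 * u 0 + M i 1 * u 1 + M i 2 * u 2 + M i 3 * u 3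
      + M i 4 * u 4 + M i 5 * u 5 := by
  simp [Matrix.mulVec, dotProduct, Fin.sum_univ_six]

lemma rank_ge_of_submatrix (A : Matrix (Fin 6) (Fin 6) ℂ) (r c : Fin 4 → Fin 6)
    (h : (A.submatrix r c).det ≠ 0) : 4 ≤ A.rank := by
  classical
  set Q : Matrix (Fin 4) (Fin 6) ℂ := fun i j => if r i = j then 1 else 0 with hQ
  set P : Matrix (Fin 6) (Fin 4) ℂ := fun j k => if c k = j then 1 else 0 with hP
  have hfac : A.submatrix r c = Q * A * P := by
    ext i k
    simp only [Matrix.submatrix_apply, Matrix.mul_apply]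
    simp [Matrix.mul_apply, hQ, hP, ite_mul, mul_ite, Finset.sum_ite_eq, Finset.sum_ite_eq']
  have h4 : (A.submatrix r c).rank = 4 := by
    rw [Matrix.rank_of_isUnit _ ((Matrix.isUnit_iff_isUnit_det _).2 (isUnit_iff_ne_zero.2 h))]
    simp
  calc (4 : ℕ) = (A.submatrix r c).rank := h4.symm
    _ = (Q * A * P).rank := by rw [hfac]
    _ ≤ (Q * A).rank := Matrix.rank_mul_le_left _ _
    _ ≤ A.rank := Matrix.rank_mul_le_right _ _

lemma rank_le_of_two_ker (A : Matrix (Fin 6) (Fin 6) ℂ) (u v : Fin 6 → ℂ)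
    (hu : A.mulVec u = 0) (hv : A.mulVec v = 0) (i j : Fin 6)
    (hd : u i * v j - u j * v i ≠ 0) : A.rank ≤ 4 := by
  have hind : LinearIndependent ℂ ![u, v] := by
    rw [LinearIndependent.pair_iff]
    intro s t hst
    have hi := congrFun hst i
    have hj := congrFun hst j
    simp only [Pi.add_apply, Pi.smul_apply, smul_eq_mul, Pi.zero_apply] at hi hj
    have hs : s = 0 := by
      have h1 : s * (u i * v j - u j * v i) = 0 := by linear_combination v j * hi - v i * hj
      exact (mul_eq_zero.1 h1).resolve_right hd
    refine ⟨hs, ?_⟩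
    have h2 : t * (u i * v j - u j * v i) = 0 := by linear_combination u i * hj - u j * hi
    exact (mul_eq_zero.1 h2).resolve_right hd
  have hspan : Module.finrank ℂ (Submodule.span ℂ (Set.range ![u, v])) = 2 := by
    rw [finrank_span_eq_card hind]; simp
  have hle : Submodule.span ℂ (Set.range ![u, v]) ≤ LinearMap.ker A.mulVecLin := by
    rw [Submodule.span_le]
    rintro x ⟨k, rfl⟩
    fin_cases k <;> simp [LinearMap.mem_ker, Matrix.mulVecLin_apply, hu, hv]
  have h2 : 2 ≤ Module.finrank ℂ (LinearMap.ker A.mulVecLin) := by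
    rw [← hspan]; exact Submodule.finrank_mono hle
  have hrn := A.mulVecLin.finrank_range_add_finrank_ker
  simp only [Module.finrank_fintype_fun_eq_card, Fintype.card_fin] at hrn
  rw [Matrix.rank]
  omega

lemma ker_u (a b c d : ℂ) (hq : a * b - c ^ 2 + b * d - c * d = 0) :
    (A17 a b c d).mulVec ![a * b, -(a * c), a * b - c * d, a * d - b * c, b ^ 2 - a * c, 0] = 0 := by
  funext i
  fin_cases i
  · rw [mulVec6]
    show (0) * (a * b) + (0) * (-(a * c)) + (b) * (a * b - c * d) + (c) * (a * d - b * c) + (d) * (b ^ 2 - a * c) + (a) * (0) = 0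
    linear_combination b * hq
  · rw [mulVec6]
    show (0) * (a * b) + (0) * (-(a * c)) + (a) * (a * b - c * d) + (b) * (a * d - b * c) + (c) * (b ^ 2 - a * c) + (d) * (0) = 0
    linear_combination a * hq
  · rw [mulVec6]
    show (-b) * (a * b) + (-a) * (-(a * c)) + (0) * (a * b - c * d) + (0) * (a * d - b * c) + (a) * (b ^ 2 - a * c) + (-a) * (0) = 0
    ring
  · rw [mulVec6]
    show (-c) * (a * b) + (-b) * (-(a * c)) + (0) * (a * b - c * d) + (0) * (a * d - b * c) + (0) * (b ^ 2 - a * c) + (0) * (0) = 0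
    ring
  · rw [mulVec6]
    show (-d) * (a * b) + (-c) * (-(a * c)) + (-a) * (a * b - c * d) + (0) * (a * d - b * c) + (0) * (b ^ 2 - a * c) + (0) * (0) = 0
    linear_combination -(a * hq)
  · rw [mulVec6]
    show (-a) * (a * b) + (-d) * (-(a * c)) + (a) * (a * b - c * d) + (0) * (a * d - b * c) + (0) * (b ^ 2 - a * c) + (0) * (0) = 0
    ring

lemma ker_w1 (a b c d : ℂ) (hq : a * b - c ^ 2 + b * d - c * d = 0) :
    (A17 a b c d).mulVec ![0, 0, 0, a + d, -c, -c] = 0 := by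
  funext i
  fin_cases i
  · rw [mulVec6]
    show (0) * (0) + (0) * (0) + (b) * (0) + (c) * (a + d) + (d) * (-c) + (a) * (-c) = 0
    ring
  · rw [mulVec6]
    show (0) * (0) + (0) * (0) + (a) * (0) + (b) * (a + d) + (c) * (-c) + (d) * (-c) = 0
    linear_combination hq
  · rw [mulVec6]
    show (-b) * (0) + (-a) * (0) + (0) * (0) + (0) * (a + d) + (a) * (-c) + (-a) * (-c) = 0
    ring
  · rw [mulVec6]
    show (-c) * (0) + (-b) * (0) + (0) * (0) + (0) * (a + d) + (0) * (-c) + (0) * (-c) = 0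
    ring
  · rw [mulVec6]
    show (-d) * (0) + (-c) * (0) + (-a) * (0) + (0) * (a + d) + (0) * (-c) + (0) * (-c) = 0
    ring
  · rw [mulVec6]
    show (-a) * (0) + (-d) * (0) + (a) * (0) + (0) * (a + d) + (0) * (-c) + (0) * (-c) = 0
    ring

lemma ker_w2 (a b c d : ℂ) (hq : a * b - c ^ 2 + b * d - c * d = 0) :
    (A17 a b c d).mulVec ![0, 0, 0, c + d, -b, -b] = 0 := by
  funext i
  fin_cases i
  · rw [mulVec6]
    show (0) * (0) + (0) * (0) + (b) * (0) + (c) * (c + d) + (d) * (-b) + (a) * (-b) = 0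
    linear_combination -hq
  · rw [mulVec6]
    show (0) * (0) + (0) * (0) + (a) * (0) + (b) * (c + d) + (c) * (-b) + (d) * (-b) = 0
    ring
  · rw [mulVec6]
    show (-b) * (0) + (-a) * (0) + (0) * (0) + (0) * (c + d) + (a) * (-b) + (-a) * (-b) = 0
    ring
  · rw [mulVec6]
    show (-c) * (0) + (-b) * (0) + (0) * (0) + (0) * (c + d) + (0) * (-b) + (0) * (-b) = 0
    ring
  · rw [mulVec6]
    show (-d) * (0) + (-c) * (0) + (-a) * (0) + (0) * (c + d) + (0) * (-b) + (0) * (-b) = 0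
    ring
  · rw [mulVec6]
    show (-a) * (0) + (-d) * (0) + (a) * (0) + (0) * (c + d) + (0) * (-b) + (0) * (-b) = 0
    ring

lemma ker_x (b c d : ℂ) :
    (A17 0 b c d).mulVec ![0, 0, c ^ 2 - b * d, -(b * c), b ^ 2, 0] = 0 := by
  funext i
  fin_cases i
  · rw [mulVec6]
    show (0) * (0) + (0) * (0) + (b) * (c ^ 2 - b * d) + (c) * (-(b * c)) + (d) * (b ^ 2) + (0) * (0) = 0
    ring
  · rw [mulVec6]
    show (0) * (0) + (0) * (0) + (0) * (c ^ 2 - b * d) + (b) * (-(b * c)) + (c) * (b ^ 2) + (d) * (0) = 0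
    ring
  · rw [mulVec6]
    show (-b) * (0) + (-0) * (0) + (0) * (c ^ 2 - b * d) + (0) * (-(b * c)) + (0) * (b ^ 2) + (-0) * (0) = 0
    ring
  · rw [mulVec6]
    show (-c) * (0) + (-b) * (0) + (0) * (c ^ 2 - b * d) + (0) * (-(b * c)) + (0) * (b ^ 2) + (0) * (0) = 0
    ring
  · rw [mulVec6]
    show (-d) * (0) + (-c) * (0) + (-0) * (c ^ 2 - b * d) + (0) * (-(b * c)) + (0) * (b ^ 2) + (0) * (0) = 0
    ring
  · rw [mulVec6]
    show (-0) * (0) + (-d) * (0) + (0) * (c ^ 2 - b * d) + (0) * (-(b * c)) + (0) * (b ^ 2) + (0) * (0) = 0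
    ring

lemma ker_y (b c d : ℂ) :
    (A17 0 b c d).mulVec ![0, 0, c * d, -(b * d), 0, b ^ 2] = 0 := by
  funext i
  fin_cases i
  · rw [mulVec6]
    show (0) * (0) + (0) * (0) + (b) * (c * d) + (c) * (-(b * d)) + (d) * (0) + (0) * (b ^ 2) = 0
    ring
  · rw [mulVec6]
    show (0) * (0) + (0) * (0) + (0) * (c * d) + (b) * (-(b * d)) + (c) * (0) + (d) * (b ^ 2) = 0
    ring
  · rw [mulVec6]
    show (-b) * (0) + (-0) * (0) + (0) * (c * d) + (0) * (-(b * d)) + (0) * (0) + (-0) * (b ^ 2) = 0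
    ring
  · rw [mulVec6]
    show (-c) * (0) + (-b) * (0) + (0) * (c * d) + (0) * (-(b * d)) + (0) * (0) + (0) * (b ^ 2) = 0
    ring
  · rw [mulVec6]
    show (-d) * (0) + (-c) * (0) + (-0) * (c * d) + (0) * (-(b * d)) + (0) * (0) + (0) * (b ^ 2) = 0
    ring
  · rw [mulVec6]
    show (-0) * (0) + (-d) * (0) + (0) * (c * d) + (0) * (-(b * d)) + (0) * (0) + (0) * (b ^ 2) = 0
    ring

lemma ker_e2 (c : ℂ) :
    (A17 0 0 c (-c)).mulVec ![0, 0, 1, 0, 0, 0] = 0 := by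
  funext i
  fin_cases i
  · rw [mulVec6]
    show (0) * (0) + (0) * (0) + (0) * (1) + (c) * (0) + ((-c)) * (0) + (0) * (0) = 0
    ring
  · rw [mulVec6]
    show (0) * (0) + (0) * (0) + (0) * (1) + (0) * (0) + (c) * (0) + ((-c)) * (0) = 0
    ring
  · rw [mulVec6]
    show (-0) * (0) + (-0) * (0) + (0) * (1) + (0) * (0) + (0) * (0) + (-0) * (0) = 0
    ring
  · rw [mulVec6]
    show (-c) * (0) + (-0) * (0) + (0) * (1) + (0) * (0) + (0) * (0) + (0) * (0) = 0
    ring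
  · rw [mulVec6]
    show (-((-c))) * (0) + (-c) * (0) + (-0) * (1) + (0) * (0) + (0) * (0) + (0) * (0) = 0
    ring
  · rw [mulVec6]
    show (-0) * (0) + (-((-c))) * (0) + (0) * (1) + (0) * (0) + (0) * (0) + (0) * (0) = 0
    ring

lemma ker_v2 (c : ℂ) :
    (A17 0 0 c (-c)).mulVec ![0, 0, 0, 1, 1, 1] = 0 := by
  funext i
  fin_cases i
  · rw [mulVec6]
    show (0) * (0) + (0) * (0) + (0) * (0) + (c) * (1) + ((-c)) * (1) + (0) * (1) = 0
    ring
  · rw [mulVec6]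
    show (0) * (0) + (0) * (0) + (0) * (0) + (0) * (1) + (c) * (1) + ((-c)) * (1) = 0
    ring
  · rw [mulVec6]
    show (-0) * (0) + (-0) * (0) + (0) * (0) + (0) * (1) + (0) * (1) + (-0) * (1) = 0
    ring
  · rw [mulVec6]
    show (-c) * (0) + (-0) * (0) + (0) * (0) + (0) * (1) + (0) * (1) + (0) * (1) = 0
    ring
  · rw [mulVec6]
    show (-((-c))) * (0) + (-c) * (0) + (-0) * (0) + (0) * (1) + (0) * (1) + (0) * (1) = 0
    ring
  · rw [mulVec6]
    show (-0) * (0) + (-((-c))) * (0) + (0) * (0) + (0) * (1) + (0) * (1) + (0) * (1) = 0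
    ring

lemma ker_e2d (d : ℂ) :
    (A17 0 0 0 d).mulVec ![0, 0, 1, 0, 0, 0] = 0 := by
  funext i
  fin_cases i
  · rw [mulVec6]
    show (0) * (0) + (0) * (0) + (0) * (1) + (0) * (0) + (d) * (0) + (0) * (0) = 0
    ring
  · rw [mulVec6]
    show (0) * (0) + (0) * (0) + (0) * (1) + (0) * (0) + (0) * (0) + (d) * (0) = 0
    ring
  · rw [mulVec6]
    show (-0) * (0) + (-0) * (0) + (0) * (1) + (0) * (0) + (0) * (0) + (-0) * (0) = 0
    ring
  · rw [mulVec6]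
    show (-0) * (0) + (-0) * (0) + (0) * (1) + (0) * (0) + (0) * (0) + (0) * (0) = 0
    ring
  · rw [mulVec6]
    show (-d) * (0) + (-0) * (0) + (-0) * (1) + (0) * (0) + (0) * (0) + (0) * (0) = 0
    ring
  · rw [mulVec6]
    show (-0) * (0) + (-d) * (0) + (0) * (1) + (0) * (0) + (0) * (0) + (0) * (0) = 0
    ring

lemma ker_e3d (d : ℂ) :
    (A17 0 0 0 d).mulVec ![0, 0, 0, 1, 0, 0] = 0 := by
  funext i
  fin_cases i
  · rw [mulVec6]
    show (0) * (0) + (0) * (0) + (0) * (0) + (0) * (1) + (d) * (0) + (0) * (0) = 0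
    ring
  · rw [mulVec6]
    show (0) * (0) + (0) * (0) + (0) * (0) + (0) * (1) + (0) * (0) + (d) * (0) = 0
    ring
  · rw [mulVec6]
    show (-0) * (0) + (-0) * (0) + (0) * (0) + (0) * (1) + (0) * (0) + (-0) * (0) = 0
    ring
  · rw [mulVec6]
    show (-0) * (0) + (-0) * (0) + (0) * (0) + (0) * (1) + (0) * (0) + (0) * (0) = 0
    ring
  · rw [mulVec6]
    show (-d) * (0) + (-0) * (0) + (-0) * (0) + (0) * (1) + (0) * (0) + (0) * (0) = 0
    ring
  · rw [mulVec6]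
    show (-0) * (0) + (-d) * (0) + (0) * (0) + (0) * (1) + (0) * (0) + (0) * (0) = 0
    ring

lemma ker_e3 (a d : ℂ) :
    (A17 a 0 0 d).mulVec ![0, 0, 0, 1, 0, 0] = 0 := by
  funext i
  fin_cases i
  · rw [mulVec6]
    show (0) * (0) + (0) * (0) + (0) * (0) + (0) * (1) + (d) * (0) + (a) * (0) = 0
    ring
  · rw [mulVec6]
    show (0) * (0) + (0) * (0) + (a) * (0) + (0) * (1) + (0) * (0) + (d) * (0) = 0
    ring
  · rw [mulVec6]
    show (-0) * (0) + (-a) * (0) + (0) * (0) + (0) * (1) + (a) * (0) + (-a) * (0) = 0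
    ring
  · rw [mulVec6]
    show (-0) * (0) + (-0) * (0) + (0) * (0) + (0) * (1) + (0) * (0) + (0) * (0) = 0
    ring
  · rw [mulVec6]
    show (-d) * (0) + (-0) * (0) + (-a) * (0) + (0) * (1) + (0) * (0) + (0) * (0) = 0
    ring
  · rw [mulVec6]
    show (-a) * (0) + (-d) * (0) + (a) * (0) + (0) * (1) + (0) * (0) + (0) * (0) = 0
    ring

lemma ker_z (a d : ℂ) :
    (A17 a 0 0 d).mulVec ![-(a * d), a * (a + d), d ^ 2, 0, a ^ 2, -(a * d)] = 0 := by
  funext i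
  fin_cases i
  · rw [mulVec6]
    show (0) * (-(a * d)) + (0) * (a * (a + d)) + (0) * (d ^ 2) + (0) * (0) + (d) * (a ^ 2) + (a) * (-(a * d)) = 0
    ring
  · rw [mulVec6]
    show (0) * (-(a * d)) + (0) * (a * (a + d)) + (a) * (d ^ 2) + (0) * (0) + (0) * (a ^ 2) + (d) * (-(a * d)) = 0
    ring
  · rw [mulVec6]
    show (-0) * (-(a * d)) + (-a) * (a * (a + d)) + (0) * (d ^ 2) + (0) * (0) + (a) * (a ^ 2) + (-a) * (-(a * d)) = 0
    ring
  · rw [mulVec6]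
    show (-0) * (-(a * d)) + (-0) * (a * (a + d)) + (0) * (d ^ 2) + (0) * (0) + (0) * (a ^ 2) + (0) * (-(a * d)) = 0
    ring
  · rw [mulVec6]
    show (-d) * (-(a * d)) + (-0) * (a * (a + d)) + (-a) * (d ^ 2) + (0) * (0) + (0) * (a ^ 2) + (0) * (-(a * d)) = 0
    ring
  · rw [mulVec6]
    show (-a) * (-(a * d)) + (-d) * (a * (a + d)) + (a) * (d ^ 2) + (0) * (0) + (0) * (a ^ 2) + (0) * (-(a * d)) = 0
    ring

lemma det_D1 (a b c d : ℂ):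
    ((A17 a b c d).submatrix ![1,2,3,5] ![1,2,3,5]).det = (a * b) ^ 2 := by
  have h : (A17 a b c d).submatrix ![1,2,3,5] ![1,2,3,5] =
      !![0, a, b, d; -a, 0, 0, -a; -b, 0, 0, 0; -d, a, 0, 0] := by
    ext i j; fin_cases i <;> fin_cases j <;> rfl
  rw [h]
  simp [Matrix.det_succ_row_zero, Fin.sum_univ_succ, Fin.succAbove]
  ring

lemma det_D2 (a b c d : ℂ):
    ((A17 a b c d).submatrix ![0,2,3,5] ![0,2,3,5]).det = (a * c) ^ 2 := by
  have h : (A17 a b c d).submatrix ![0,2,3,5] ![0,2,3,5] =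
      !![0, b, c, a; -b, 0, 0, -a; -c, 0, 0, 0; -a, a, 0, 0] := by
    ext i j; fin_cases i <;> fin_cases j <;> rfl
  rw [h]
  simp [Matrix.det_succ_row_zero, Fin.sum_univ_succ, Fin.succAbove]
  ring

lemma det_D3 (a d : ℂ):
    ((A17 a 0 0 d).submatrix ![1,2,4,5] ![1,2,4,5]).det = (a * d) ^ 2 := by
  have h : (A17 a 0 0 d).submatrix ![1,2,4,5] ![1,2,4,5] =
      !![0, a, 0, d; -a, 0, a, -a; -0, -a, 0, 0; -d, a, 0, 0] := by
    ext i j; fin_cases i <;> fin_cases j <;> rfl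
  rw [h]
  simp [Matrix.det_succ_row_zero, Fin.sum_univ_succ, Fin.succAbove]
  ring

lemma det_D4 (a d : ℂ):
    ((A17 a 0 0 d).submatrix ![0,2,4,5] ![0,2,4,5]).det = (a * (a + d)) ^ 2 := by
  have h : (A17 a 0 0 d).submatrix ![0,2,4,5] ![0,2,4,5] =
      !![0, 0, d, a; -0, 0, a, -a; -d, -a, 0, 0; -a, a, 0, 0] := by
    ext i j; fin_cases i <;> fin_cases j <;> rfl
  rw [h]
  simp [Matrix.det_succ_row_zero, Fin.sum_univ_succ, Fin.succAbove]
  ring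

lemma det_D5 (b c d : ℂ):
    ((A17 0 b c d).submatrix ![0,1,2,3] ![2,3,0,1]).det = b ^ 4 := by
  have h : (A17 0 b c d).submatrix ![0,1,2,3] ![2,3,0,1] =
      !![b, c, 0, 0; 0, b, 0, 0; 0, 0, -b, -0; 0, 0, -c, -b] := by
    ext i j; fin_cases i <;> fin_cases j <;> rfl
  rw [h]
  simp [Matrix.det_succ_row_zero, Fin.sum_univ_succ, Fin.succAbove]
  ring

lemma det_D6 (c : ℂ):
    ((A17 0 0 c (-c)).submatrix ![0,1,3,5] ![3,4,0,1]).det = -(c ^ 4) := by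
  have h : (A17 0 0 c (-c)).submatrix ![0,1,3,5] ![3,4,0,1] =
      !![c, (-c), 0, 0; 0, c, 0, 0; 0, 0, -c, -0; 0, 0, -0, -((-c))] := by
    ext i j; fin_cases i <;> fin_cases j <;> rfl
  rw [h]
  simp [Matrix.det_succ_row_zero, Fin.sum_univ_succ, Fin.succAbove]
  ring

lemma det_D7 (d : ℂ):
    ((A17 0 0 0 d).submatrix ![0,1,4,5] ![4,5,0,1]).det = d ^ 4 := by
  have h : (A17 0 0 0 d).submatrix ![0,1,4,5] ![4,5,0,1] =
      !![d, 0, 0, 0; 0, d, 0, 0; 0, 0, -d, -0; 0, 0, -0, -d] := by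
    ext i j; fin_cases i <;> fin_cases j <;> rfl
  rw [h]
  simp [Matrix.det_succ_row_zero, Fin.sum_univ_succ, Fin.succAbove]
  ring


lemma rank_A17 (a b c d : ℂ) (hne : (a, b, c, d) ≠ (0, 0, 0, 0))
    (hq : a * b - c ^ 2 + b * d - c * d = 0) : (A17 a b c d).rank = 4 := by
  by_cases ha : a = 0
  · subst ha
    by_cases hb : b = 0
    · subst hb
      by_cases hc : c = 0
      · subst hc
        have hd : d ≠ 0 := by simpa using hne
        refine le_antisymm ?_ ?_
        · refine rank_le_of_two_ker _ _ _ (ker_e2d d) (ker_e3d d) 2 3 ?_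
          show (1 : ℂ) * 1 - 0 * 0 ≠ 0
          norm_num
        · refine rank_ge_of_submatrix _ ![0,1,4,5] ![4,5,0,1] ?_
          rw [det_D7]
          exact pow_ne_zero 4 hd
      · have hd : d = -c := by
          have h2 : c * (c + d) = 0 := by linear_combination -hq
          rcases mul_eq_zero.1 h2 with h | h
          · exact absurd h hc
          · exact eq_neg_of_add_eq_zero_right h
        subst hd
        refine le_antisymm ?_ ?_
        · refine rank_le_of_two_ker _ _ _ (ker_e2 c) (ker_v2 c) 2 3 ?_
          show (1 : ℂ) * 1 - 0 * 0 ≠ 0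
          norm_num
        · refine rank_ge_of_submatrix _ ![0,1,3,5] ![3,4,0,1] ?_
          rw [det_D6]
          exact neg_ne_zero.2 (pow_ne_zero 4 hc)
    · refine le_antisymm ?_ ?_
      · refine rank_le_of_two_ker _ _ _ (ker_x b c d) (ker_y b c d) 4 5 ?_
        show b ^ 2 * b ^ 2 - 0 * 0 ≠ 0
        have e : b ^ 2 * b ^ 2 - (0 : ℂ) * 0 = b ^ 4 := by ring
        rw [e]
        exact pow_ne_zero 4 hb
      · refine rank_ge_of_submatrix _ ![0,1,2,3] ![2,3,0,1] ?_
        rw [det_D5]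
        exact pow_ne_zero 4 hb
  · by_cases hbc : b = 0 ∧ c = 0
    · obtain ⟨hb, hc⟩ := hbc
      subst hb; subst hc
      by_cases hd : d = 0
      · subst hd
        refine le_antisymm ?_ ?_
        · refine rank_le_of_two_ker _ _ _ (ker_e3 a 0) (ker_z a 0) 3 4 ?_
          show (1 : ℂ) * a ^ 2 - 0 * 0 ≠ 0
          have e : (1 : ℂ) * a ^ 2 - 0 * 0 = a ^ 2 := by ring
          rw [e]
          exact pow_ne_zero 2 ha
        · refine rank_ge_of_submatrix _ ![0,2,4,5] ![0,2,4,5] ?_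
          rw [det_D4]
          have e : (a * (a + 0)) ^ 2 = a ^ 4 := by ring
          rw [e]
          exact pow_ne_zero 4 ha
      · refine le_antisymm ?_ ?_
        · refine rank_le_of_two_ker _ _ _ (ker_e3 a d) (ker_z a d) 3 4 ?_
          show (1 : ℂ) * a ^ 2 - 0 * 0 ≠ 0
          have e : (1 : ℂ) * a ^ 2 - 0 * 0 = a ^ 2 := by ring
          rw [e]
          exact pow_ne_zero 2 ha
        · refine rank_ge_of_submatrix _ ![1,2,4,5] ![1,2,4,5] ?_
          rw [det_D3]
          exact pow_ne_zero 2 (mul_ne_zero ha hd)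
    · rcases not_and_or.1 hbc with hb | hc
      · -- here c ≠ 0 is not known; but b ≠ 0 fails... hb : ¬ b = 0
        refine le_antisymm ?_ ?_
        · refine rank_le_of_two_ker _ _ _ (ker_u a b c d hq) (ker_w2 a b c d hq) 0 4 ?_
          show a * b * (-b) - (b ^ 2 - a * c) * 0 ≠ 0
          have e : a * b * (-b) - (b ^ 2 - a * c) * 0 = -(a * b ^ 2) := by ring
          rw [e]
          exact neg_ne_zero.2 (mul_ne_zero ha (pow_ne_zero 2 hb))
        · refine rank_ge_of_submatrix _ ![1,2,3,5] ![1,2,3,5] ?_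
          rw [det_D1]
          exact pow_ne_zero 2 (mul_ne_zero ha hb)
      · refine le_antisymm ?_ ?_
        · refine rank_le_of_two_ker _ _ _ (ker_u a b c d hq) (ker_w1 a b c d hq) 1 4 ?_
          show -(a * c) * (-c) - (b ^ 2 - a * c) * 0 ≠ 0
          have e : -(a * c) * (-c) - (b ^ 2 - a * c) * 0 = a * c ^ 2 := by ring
          rw [e]
          exact mul_ne_zero ha (pow_ne_zero 2 hc)
        · refine rank_ge_of_submatrix _ ![0,2,3,5] ![0,2,3,5] ?_
          rw [det_D2]
          exact pow_ne_zero 2 (mul_ne_zero ha hc)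


/-- The Pfaffian of the matrix (O(2,1)+O(0,1)) equals, up to a nonzero constant,
`a * (ab - c² + bd - cd)`, and the matrix has rank exactly 4 at every point
`[a:b:c:d]` of the quadric `{ab - c² + bd - cd = 0} ⊂ ℙ³`. -/
theorem pfaffian_rank_A17 :
    (∃ lam : ℂ, lam ≠ 0 ∧
      ∀ a b c d : ℂ,
        Pf 3 (A17 a b c d) = lam * (a * (a * b - c ^ 2 + b * d - c * d))) ∧
    (∀ a b c d : ℂ, (a, b, c, d) ≠ (0, 0, 0, 0) →
      a * b - c ^ 2 + b * d - c * d = 0 → (A17 a b c d).rank = 4) := by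
  constructor
  · exact ⟨-1, by norm_num, fun a b c d => by rw [pf_eval]; ring⟩
  · exact rank_A17
end
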